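/- Let $d = 1$ and $\alpha > 0$. Define $g_\alpha^x(y) = \int_0^\infty e^{-\alpha t} p_t(x,y)\,dt$ and $g_{\alpha,\varepsilon}^x(y) = \int_0^\infty e^{-\alpha t} p_{t+\varepsilon}(x,y)\,dt$ for $\varepsilon > 0$. Then $\eta(\varepsilon) := \sup_{x, y \in \mathbb{R}} |g_{\alpha,\varepsilon}^x(y) - g_\alpha^x(y)| \to 0$ as $\varepsilon \downarrow 0$. -/

import Mathlib

/-!
Shifting time, `g_{α,ε}(x, y) = e^{αε} ∫_ε^∞ e^{-αt} p_t(x, y) dt`, so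
`g_{α,ε} - g_α = (e^{αε} - 1) ∫_ε^∞ e^{-αt} p_t dt - ∫_0^ε e^{-αt} p_t dt`.
In dimension one `p_t ≤ (2πt)^{-1/2}` uniformly in `x, y`, so the first integral is bounded by
the finite constant `∫_0^∞ (2πt)^{-1/2} e^{-αt} dt` and the second by `(2π)^{-1/2} · 2√ε`;
both terms of the difference therefore vanish uniformly as `ε ↓ 0`.
-/

open MeasureTheory Real Set Filter

/-- The one-dimensional Gaussian heat kernel. -/
noncomputable def heatKernel1 (t a x : ℝ) : ℝ :=
  (2 * π * t) ^ (-(1 : ℝ) / 2) * Real.exp (-|x - a| ^ 2 / (2 * t))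

/-- The `α`-resolvent kernel in dimension one. -/
noncomputable def gRes1 (α a x : ℝ) : ℝ :=
  ∫ t in Ioi (0 : ℝ), Real.exp (-α * t) * heatKernel1 t a x

/-- The regularized `α`-resolvent kernel in dimension one. -/
noncomputable def gResReg1 (α ε a x : ℝ) : ℝ :=
  ∫ t in Ioi (0 : ℝ), Real.exp (-α * t) * heatKernel1 (t + ε) a x

lemma setIntegral_Ioi_comp_add_right {E : Type*} [NormedAddCommGroup E] [NormedSpace ℝ E]
    (f : ℝ → E) (a b : ℝ) : ∫ x in Ioi a, f (x + b) = ∫ x in Ioi (a + b), f x := by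
  have h := (measurePreserving_add_right volume b).setIntegral_preimage_emb
    (measurableEmbedding_addRight b) f (Ioi (a + b))
  rwa [preimage_add_const_Ioi, add_sub_cancel_right] at h

lemma setIntegral_Ioc_rpow_neg_half {ε : ℝ} (hε : 0 ≤ ε) :
    ∫ t in Ioc 0 ε, t ^ (-(1 : ℝ) / 2) = 2 * √ε := by
  rw [← intervalIntegral.integral_of_le hε, integral_rpow (Or.inl (by norm_num)),
    show -(1 : ℝ) / 2 + 1 = 1 / 2 by norm_num, zero_rpow (by norm_num), sqrt_eq_rpow]
  ring

lemma heatKernel1_nonneg {t : ℝ} (ht : 0 < t) (a x : ℝ) : 0 ≤ heatKernel1 t a x := by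
  unfold heatKernel1
  positivity

lemma heatKernel1_le {t : ℝ} (ht : 0 < t) (a x : ℝ) :
    heatKernel1 t a x ≤ (2 * π) ^ (-(1 : ℝ) / 2) * t ^ (-(1 : ℝ) / 2) := by
  rw [heatKernel1, mul_rpow (by positivity) ht.le]
  refine mul_le_of_le_one_right (by positivity) (exp_le_one_iff.2 ?_)
  exact div_nonpos_of_nonpos_of_nonneg (neg_nonpos.2 (by positivity)) (by positivity)

noncomputable def resolventMajorant (α t : ℝ) : ℝ :=
  (2 * π) ^ (-(1 : ℝ) / 2) * t ^ (-(1 : ℝ) / 2) * exp (-α * t)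

section Resolvent

variable {α : ℝ}

lemma resolventMajorant_nonneg {t : ℝ} (ht : 0 ≤ t) : 0 ≤ resolventMajorant α t := by
  unfold resolventMajorant
  positivity

lemma integrableOn_resolventMajorant (hα : 0 < α) :
    IntegrableOn (resolventMajorant α) (Ioi 0) := by
  have h := (integrableOn_rpow_mul_exp_neg_mul_rpow (p := 1) (by norm_num : -1 < -(1 : ℝ) / 2)
    one_pos hα).const_mul ((2 * π) ^ (-(1 : ℝ) / 2))
  refine IntegrableOn.congr_fun h (fun t _ ↦ ?_) measurableSet_Ioi
  simp only [resolventMajorant, rpow_one, mul_assoc]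

lemma exp_mul_heatKernel1_le_resolventMajorant {t : ℝ} (ht : 0 < t) (a x : ℝ) :
    exp (-α * t) * heatKernel1 t a x ≤ resolventMajorant α t := by
  rw [resolventMajorant, mul_comm]
  exact mul_le_mul_of_nonneg_right (heatKernel1_le ht a x) (exp_pos _).le

lemma integrableOn_exp_mul_heatKernel1 (hα : 0 < α) (a x : ℝ) :
    IntegrableOn (fun t ↦ exp (-α * t) * heatKernel1 t a x) (Ioi 0) := by
  refine (integrableOn_resolventMajorant hα).mono' (by unfold heatKernel1; fun_prop) ?_
  filter_upwards [ae_restrict_mem measurableSet_Ioi] with t ht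
  rw [norm_of_nonneg (mul_nonneg (exp_pos _).le (heatKernel1_nonneg ht a x))]
  exact exp_mul_heatKernel1_le_resolventMajorant ht a x

lemma gResReg1_eq (ε a x : ℝ) :
    gResReg1 α ε a x = exp (α * ε) * ∫ t in Ioi ε, exp (-α * t) * heatKernel1 t a x := by
  have h : ∀ t, exp (-α * t) * heatKernel1 (t + ε) a x
      = exp (α * ε) * (exp (-α * (t + ε)) * heatKernel1 (t + ε) a x) := fun t ↦ by
    rw [← mul_assoc, ← exp_add]
    ring_nf
  simp_rw [gResReg1, h, integral_const_mul, setIntegral_Ioi_comp_add_right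
    (fun t ↦ exp (-α * t) * heatKernel1 t a x), zero_add]

lemma gRes1_eq_add (hα : 0 < α) {ε : ℝ} (hε : 0 ≤ ε) (a x : ℝ) :
    gRes1 α a x = (∫ t in Ioc 0 ε, exp (-α * t) * heatKernel1 t a x)
      + ∫ t in Ioi ε, exp (-α * t) * heatKernel1 t a x := by
  have h := integrableOn_exp_mul_heatKernel1 hα a x
  rw [gRes1, ← setIntegral_union (Ioc_disjoint_Ioi le_rfl) measurableSet_Ioi
    (h.mono_set Ioc_subset_Ioi_self) (h.mono_set (Ioi_subset_Ioi hε)), Ioc_union_Ioi_eq_Ioi hε]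

lemma setIntegral_Ioi_exp_mul_heatKernel1_le (hα : 0 < α) {ε : ℝ} (hε : 0 ≤ ε) (a x : ℝ) :
    ∫ t in Ioi ε, exp (-α * t) * heatKernel1 t a x ≤ ∫ t in Ioi 0, resolventMajorant α t := by
  have hM := integrableOn_resolventMajorant hα
  calc ∫ t in Ioi ε, exp (-α * t) * heatKernel1 t a x
      ≤ ∫ t in Ioi ε, resolventMajorant α t :=
        setIntegral_mono_on ((integrableOn_exp_mul_heatKernel1 hα a x).mono_set
          (Ioi_subset_Ioi hε)) (hM.mono_set (Ioi_subset_Ioi hε)) measurableSet_Ioi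
          fun t ht ↦ exp_mul_heatKernel1_le_resolventMajorant (hε.trans_lt ht) a x
    _ ≤ ∫ t in Ioi 0, resolventMajorant α t :=
        setIntegral_mono_set hM
          ((ae_restrict_iff' measurableSet_Ioi).2 (ae_of_all _ fun _ ht ↦
            resolventMajorant_nonneg (le_of_lt ht)))
          (Ioi_subset_Ioi hε).eventuallyLE

lemma setIntegral_Ioc_exp_mul_heatKernel1_le (hα : 0 < α) {ε : ℝ} (hε : 0 ≤ ε) (a x : ℝ) :
    ∫ t in Ioc 0 ε, exp (-α * t) * heatKernel1 t a x ≤ (2 * π) ^ (-(1 : ℝ) / 2) * (2 * √ε) := by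
  rw [← setIntegral_Ioc_rpow_neg_half hε, ← integral_const_mul]
  refine setIntegral_mono_on ((integrableOn_exp_mul_heatKernel1 hα a x).mono_set
    Ioc_subset_Ioi_self) ((intervalIntegral.intervalIntegrable_rpow' (by norm_num)).1.const_mul _)
    measurableSet_Ioc fun t ht ↦ ?_
  have hexp : exp (-α * t) ≤ 1 := exp_le_one_iff.2 (by nlinarith [ht.1])
  calc exp (-α * t) * heatKernel1 t a x ≤ 1 * heatKernel1 t a x :=
        mul_le_mul_of_nonneg_right hexp (heatKernel1_nonneg ht.1 a x)
    _ ≤ _ := (one_mul _).trans_le (heatKernel1_le ht.1 a x)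

lemma abs_gResReg1_sub_gRes1_le (hα : 0 < α) {ε : ℝ} (hε : 0 ≤ ε) (a x : ℝ) :
    |gResReg1 α ε a x - gRes1 α a x| ≤ (exp (α * ε) - 1) * (∫ t in Ioi 0, resolventMajorant α t)
      + (2 * π) ^ (-(1 : ℝ) / 2) * (2 * √ε) := by
  set tail := ∫ t in Ioi ε, exp (-α * t) * heatKernel1 t a x
  set head := ∫ t in Ioc 0 ε, exp (-α * t) * heatKernel1 t a x
  have htail : 0 ≤ tail := setIntegral_nonneg measurableSet_Ioi fun t ht ↦
    mul_nonneg (exp_pos _).le (heatKernel1_nonneg (hε.trans_lt ht) a x)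
  have hhead : 0 ≤ head := setIntegral_nonneg measurableSet_Ioc fun t ht ↦
    mul_nonneg (exp_pos _).le (heatKernel1_nonneg ht.1 a x)
  have hexp : 0 ≤ exp (α * ε) - 1 := sub_nonneg.2 (one_le_exp (by positivity))
  have hdiff : gResReg1 α ε a x - gRes1 α a x = (exp (α * ε) - 1) * tail - head := by
    rw [gResReg1_eq, gRes1_eq_add hα hε]
    ring
  calc |gResReg1 α ε a x - gRes1 α a x| ≤ (exp (α * ε) - 1) * tail + head := by
        rw [hdiff, abs_le]
        constructor <;> nlinarith
    _ ≤ _ := add_le_add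
        (mul_le_mul_of_nonneg_left (setIntegral_Ioi_exp_mul_heatKernel1_le hα hε a x) hexp)
        (setIntegral_Ioc_exp_mul_heatKernel1_le hα hε a x)

end Resolvent

theorem stmt13 (α : ℝ) (hα : 0 < α) :
    Tendsto (fun ε : ℝ => ⨆ x : ℝ, ⨆ y : ℝ, |gResReg1 α ε x y - gRes1 α x y|)
      (nhdsWithin 0 (Ioi 0)) (nhds 0) := by
  set bound := fun ε : ℝ ↦ (exp (α * ε) - 1) * (∫ t in Ioi 0, resolventMajorant α t)
    + (2 * π) ^ (-(1 : ℝ) / 2) * (2 * √ε)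
  have hbound : Tendsto bound (nhdsWithin 0 (Ioi 0)) (nhds 0) :=
    ((by simp only [bound]; fun_prop : Continuous bound).tendsto' 0 0 (by simp [bound])).mono_left
      nhdsWithin_le_nhds
  refine tendsto_of_tendsto_of_tendsto_of_le_of_le' tendsto_const_nhds hbound
    (Eventually.of_forall fun ε ↦ iSup_nonneg fun x ↦ iSup_nonneg fun y ↦ abs_nonneg _) ?_
  filter_upwards [self_mem_nhdsWithin] with ε (hε : 0 < ε)
  have hle := abs_gResReg1_sub_gRes1_le hα hε.le
  have hnonneg : 0 ≤ bound ε := (abs_nonneg _).trans (hle 0 0)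
  exact Real.iSup_le (fun x ↦ Real.iSup_le (hle x) hnonneg) hnonneg
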